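/- In a ⋎-tetrad o, p, q, r with common point Z and diagonal b = (o ⊓ q) ∩ (r ⊓ p): if the plane o ⊓ p contains the point where b meets a plane ζ not through Z (equivalently contains two distinct points Z and that point of b), then o ⊓ p contains b, which forces o ⊓ p = o ⊓ q and hence the coplanarity of o, p, q — a contradiction. Hence the plane o ⊓ p does not contain any point of b other than Z. -/
import Mathlib


/-- A 'linear' framework for projective 3-space: a set of lines with an
incidence relation, together with the data of the two incidence-equivalence
classes `SigY`, `SigM` on `Σ(a,b)` and the derived points `pt` and planes `pl`. -/
structure LineGeom where
  L : Type
  dag : L → L → Prop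
  dag_refl : ∀ l, dag l l
  dag_symm : ∀ {a b}, dag a b → dag b a
  SigY : L → L → Set L
  SigM : L → L → Set L
  pt : L → L → Set L
  pl : L → L → Set L

namespace LineGeom

variable (G : LineGeom)

/-- `S†` : the lines incident to every line of `S`. -/
def perp (S : Set G.L) : Set G.L := {x | ∀ s ∈ S, G.dag x s}

/-- `Σ(a,b) = [a b] \ [a b]†`. -/
def Sig (a b : G.L) : Set G.L := G.perp {a, b} \ G.perp (G.perp {a, b})

/-- AXIOMS [1]-[4] together with the defining properties of the two classes
`Σ_⋎(a,b)`, `Σ_⊓(a,b)` and of the point `a ⋎ b` and plane `a ⊓ b`. -/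
structure Axioms : Prop where
  ax1 : ∀ l : G.L, ∃ x y z, x ∈ G.perp {l} ∧ y ∈ G.perp {l} ∧ z ∈ G.perp {l} ∧
      ¬ G.dag x y ∧ ¬ G.dag y z ∧ ¬ G.dag x z
  ax21 : ∀ a b : G.L, a ≠ b → G.dag a b →
      ∃ x ∈ G.perp {a, b}, ∃ y ∈ G.perp {a, b}, ¬ G.dag x y
  ax22 : ∀ a b : G.L, a ≠ b → G.dag a b → ∀ c ∈ G.Sig a b,
      ∀ x ∈ G.perp {a, b, c}, ∀ y ∈ G.perp {a, b, c}, G.dag x y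
  ax23 : ∀ a b : G.L, a ≠ b → G.dag a b →
      ∀ x ∈ G.perp {a, b}, ∀ y ∈ G.perp {a, b}, ¬ G.dag x y →
      G.perp {a, b} = G.perp {a, b, x} ∪ G.perp {a, b, y}
  ax3 : ∀ a b : G.L, a ≠ b → G.dag a b → ∀ c ∈ G.Sig a b,
      ∃ p q : G.L, p ≠ q ∧ G.dag p q ∧ ∃ r ∈ G.Sig p q,
        G.perp {a, b, c} ∩ G.perp {p, q, r} = ∅
  sig_union : ∀ a b : G.L, a ≠ b → G.dag a b →
      G.SigY a b ∪ G.SigM a b = G.Sig a b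
  sig_disjoint : ∀ a b : G.L, a ≠ b → G.dag a b →
      G.SigY a b ∩ G.SigM a b = ∅
  sigY_nonempty : ∀ a b : G.L, a ≠ b → G.dag a b → (G.SigY a b).Nonempty
  sigM_nonempty : ∀ a b : G.L, a ≠ b → G.dag a b → (G.SigM a b).Nonempty
  sig_class : ∀ a b : G.L, a ≠ b → G.dag a b → ∀ x ∈ G.Sig a b, ∀ y ∈ G.Sig a b,
      (((x ∈ G.SigY a b ∧ y ∈ G.SigY a b) ∨ (x ∈ G.SigM a b ∧ y ∈ G.SigM a b))
        ↔ G.dag x y)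
  sigY_symm : ∀ a b : G.L, G.SigY a b = G.SigY b a
  sigM_symm : ∀ a b : G.L, G.SigM a b = G.SigM b a
  pt_spec : ∀ a b : G.L, a ≠ b → G.dag a b → ∀ c ∈ G.SigY a b,
      G.pt a b = G.perp {a, b, c}
  pl_spec : ∀ a b : G.L, a ≠ b → G.dag a b → ∀ c ∈ G.SigM a b,
      G.pl a b = G.perp {a, b, c}
  ax4 : ∀ a b p q : G.L, a ≠ b → G.dag a b → p ≠ q → G.dag p q →
      (G.pt a b ∩ G.pt p q).Nonempty ∧ (G.pl a b ∩ G.pl p q).Nonempty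

/-- Three pairwise-incident distinct lines forming a triad. -/
def Triad (a b c : G.L) : Prop :=
  a ≠ b ∧ b ≠ c ∧ a ≠ c ∧ G.dag a b ∧ G.dag b c ∧ G.dag a c ∧
  a ∈ G.Sig b c ∧ b ∈ G.Sig c a ∧ c ∈ G.Sig a b

/-- A `⊓`-triad. -/
def MTriad (a b c : G.L) : Prop :=
  a ≠ b ∧ b ≠ c ∧ a ≠ c ∧ G.dag a b ∧ G.dag b c ∧ G.dag a c ∧
  a ∈ G.SigM b c ∧ b ∈ G.SigM c a ∧ c ∈ G.SigM a b

/-- A `⋎`-triad. -/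
def YTriad (a b c : G.L) : Prop :=
  a ≠ b ∧ b ≠ c ∧ a ≠ c ∧ G.dag a b ∧ G.dag b c ∧ G.dag a c ∧
  a ∈ G.SigY b c ∧ b ∈ G.SigY c a ∧ c ∈ G.SigY a b

/-- A `⊓`-tetrad: each of the four included triples is a `⊓`-triad. -/
def MTetrad (o p q r : G.L) : Prop :=
  G.MTriad p q r ∧ G.MTriad o q r ∧ G.MTriad o r p ∧ G.MTriad o p q

/-- A `⋎`-tetrad. -/
def YTetrad (o p q r : G.L) : Prop :=
  G.YTriad p q r ∧ G.YTriad o q r ∧ G.YTriad o r p ∧ G.YTriad o p q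

/-- A point: a set of lines of the form `x ⋎ y`. -/
def IsPoint (X : Set G.L) : Prop := ∃ x y : G.L, x ≠ y ∧ G.dag x y ∧ X = G.pt x y

/-- A plane: a set of lines of the form `x ⊓ y`. -/
def IsPlane (X : Set G.L) : Prop := ∃ x y : G.L, x ≠ y ∧ G.dag x y ∧ X = G.pl x y

end LineGeom

open LineGeom

namespace Stmt17Aux

variable {G : LineGeom}

lemma mem_perp2 {a b x : G.L} : x ∈ G.perp {a, b} ↔ G.dag x a ∧ G.dag x b := by
  simp [LineGeom.perp]

lemma mem_perp3 {a b c x : G.L} :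
    x ∈ G.perp {a, b, c} ↔ G.dag x a ∧ G.dag x b ∧ G.dag x c := by
  simp [LineGeom.perp]

lemma sigY_sub (hG : G.Axioms) {a b x : G.L} (hab : a ≠ b) (hd : G.dag a b)
    (hx : x ∈ G.SigY a b) : x ∈ G.Sig a b := by
  rw [← hG.sig_union a b hab hd]; exact Or.inl hx

lemma sigM_sub (hG : G.Axioms) {a b x : G.L} (hab : a ≠ b) (hd : G.dag a b)
    (hx : x ∈ G.SigM a b) : x ∈ G.Sig a b := by
  rw [← hG.sig_union a b hab hd]; exact Or.inr hx

lemma sig_perp {a b x : G.L} (hx : x ∈ G.Sig a b) : x ∈ G.perp {a, b} := hx.1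

lemma classOpp (hG : G.Axioms) {a b x y : G.L} (hab : a ≠ b) (hd : G.dag a b)
    (hx : x ∈ G.SigY a b) (hy : y ∈ G.SigM a b) : ¬ G.dag x y := by
  intro h
  have hdisj := hG.sig_disjoint a b hab hd
  rcases (hG.sig_class a b hab hd x (sigY_sub hG hab hd hx) y
      (sigM_sub hG hab hd hy)).mpr h with ⟨_, hyY⟩ | ⟨hxM, _⟩
  · exact Set.eq_empty_iff_forall_notMem.mp hdisj y ⟨hyY, hy⟩
  · exact Set.eq_empty_iff_forall_notMem.mp hdisj x ⟨hx, hxM⟩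

lemma sameClassY (hG : G.Axioms) {a b x y : G.L} (hab : a ≠ b) (hd : G.dag a b)
    (hx : x ∈ G.SigY a b) (hys : y ∈ G.Sig a b) (h : G.dag x y) :
    y ∈ G.SigY a b := by
  have hdisj := hG.sig_disjoint a b hab hd
  rcases (hG.sig_class a b hab hd x (sigY_sub hG hab hd hx) y hys).mpr h with
    ⟨_, hyY⟩ | ⟨hxM, _⟩
  · exact hyY
  · exact absurd (Set.eq_empty_iff_forall_notMem.mp hdisj x ⟨hx, hxM⟩) not_false

lemma sameClassM (hG : G.Axioms) {a b x y : G.L} (hab : a ≠ b) (hd : G.dag a b)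
    (hx : x ∈ G.SigM a b) (hys : y ∈ G.Sig a b) (h : G.dag x y) :
    y ∈ G.SigM a b := by
  have hdisj := hG.sig_disjoint a b hab hd
  rcases (hG.sig_class a b hab hd x (sigM_sub hG hab hd hx) y hys).mpr h with
    ⟨hxY, _⟩ | ⟨_, hyM⟩
  · exact absurd (Set.eq_empty_iff_forall_notMem.mp hdisj x ⟨hxY, hx⟩) not_false
  · exact hyM

lemma dagYY (hG : G.Axioms) {a b x y : G.L} (hab : a ≠ b) (hd : G.dag a b)
    (hx : x ∈ G.SigY a b) (hy : y ∈ G.SigY a b) : G.dag x y :=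
  (hG.sig_class a b hab hd x (sigY_sub hG hab hd hx) y
    (sigY_sub hG hab hd hy)).mp (Or.inl ⟨hx, hy⟩)

lemma dagMM (hG : G.Axioms) {a b x y : G.L} (hab : a ≠ b) (hd : G.dag a b)
    (hx : x ∈ G.SigM a b) (hy : y ∈ G.SigM a b) : G.dag x y :=
  (hG.sig_class a b hab hd x (sigM_sub hG hab hd hx) y
    (sigM_sub hG hab hd hy)).mp (Or.inr ⟨hx, hy⟩)

/-- Core lemma: a point contains the `pt` of any two of its distinct lines,
indeed is contained in it. -/
lemma subset_pt (hG : G.Axioms) {a b c l m : G.L} (hab : a ≠ b) (hd : G.dag a b)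
    (hc : c ∈ G.SigY a b) (hl : l ∈ G.perp {a, b, c}) (hm : m ∈ G.perp {a, b, c})
    (hlm : l ≠ m) : G.perp {a, b, c} ⊆ G.pt l m := by
  have hcS : c ∈ G.Sig a b := sigY_sub hG hab hd hc
  have pairP : ∀ s ∈ G.perp {a, b, c}, ∀ t ∈ G.perp {a, b, c}, G.dag s t :=
    hG.ax22 a b hab hd c hcS
  have hdlm : G.dag l m := pairP l hl m hm
  have hsub2 : G.perp {a, b, c} ⊆ G.perp {l, m} := fun t ht =>
    mem_perp2.mpr ⟨pairP t ht l hl, pairP t ht m hm⟩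
  obtain ⟨ey, hey⟩ := hG.sigY_nonempty l m hlm hdlm
  have hptlm := hG.pt_spec l m hlm hdlm ey hey
  have haP : a ∈ G.perp {a, b, c} :=
    mem_perp3.mpr ⟨G.dag_refl a, hd, G.dag_symm (sig_perp hcS a (Set.mem_insert a {b}))⟩
  have hbP : b ∈ G.perp {a, b, c} :=
    mem_perp3.mpr ⟨G.dag_symm hd, G.dag_refl b,
      G.dag_symm (sig_perp hcS b (Set.mem_insert_of_mem a rfl))⟩
  have hcP : c ∈ G.perp {a, b, c} :=
    mem_perp3.mpr ⟨sig_perp hcS a (Set.mem_insert a {b}),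
      sig_perp hcS b (Set.mem_insert_of_mem a rfl), G.dag_refl c⟩
  by_cases hcase : ∃ u ∈ G.perp {a, b, c}, u ∈ G.SigM l m
  · exfalso
    obtain ⟨u, huP, huM⟩ := hcase
    obtain ⟨em, hem⟩ := hG.sigM_nonempty l m hlm hdlm
    have hemS : em ∈ G.Sig l m := sigM_sub hG hlm hdlm hem
    have hpllm := hG.pl_spec l m hlm hdlm em hem
    have hPsub : G.perp {a, b, c} ⊆ G.pl l m := by
      intro t ht
      rw [hpllm, mem_perp3]
      refine ⟨pairP t ht l hl, pairP t ht m hm, ?_⟩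
      have ht2 : t ∈ G.perp {l, m} := hsub2 ht
      by_cases htS : t ∈ G.Sig l m
      · have htM : t ∈ G.SigM l m :=
          sameClassM hG hlm hdlm huM htS (pairP u huP t ht)
        exact dagMM hG hlm hdlm htM hem
      · have hpp : t ∈ G.perp (G.perp {l, m}) := by
          by_contra hpp; exact htS ⟨ht2, hpp⟩
        exact hpp em (sig_perp hemS)
    have hrev : G.pl l m ⊆ G.perp {a, b, c} := by
      intro s hs
      rw [hpllm] at hs
      have pairQ := hG.ax22 l m hlm hdlm em hemS
      exact mem_perp3.mpr ⟨pairQ s hs a (by rw [← hpllm]; exact hPsub haP),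
        pairQ s hs b (by rw [← hpllm]; exact hPsub hbP),
        pairQ s hs c (by rw [← hpllm]; exact hPsub hcP)⟩
    have hPeq : G.perp {a, b, c} = G.pl l m :=
      Set.Subset.antisymm hPsub hrev
    obtain ⟨p', q', hpq, hdpq, r', hrS, hdisj⟩ := hG.ax3 a b hab hd c hcS
    have hrU : r' ∈ G.SigY p' q' ∪ G.SigM p' q' := by
      rw [hG.sig_union p' q' hpq hdpq]; exact hrS
    rcases hrU with hrY | hrM
    · obtain ⟨j, hj1, hj2⟩ := (hG.ax4 a b p' q' hab hd hpq hdpq).1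
      rw [hG.pt_spec a b hab hd c hc] at hj1
      rw [hG.pt_spec p' q' hpq hdpq r' hrY] at hj2
      exact Set.eq_empty_iff_forall_notMem.mp hdisj j ⟨hj1, hj2⟩
    · obtain ⟨j, hj1, hj2⟩ := (hG.ax4 l m p' q' hlm hdlm hpq hdpq).2
      rw [← hPeq] at hj1
      rw [hG.pl_spec p' q' hpq hdpq r' hrM] at hj2
      exact Set.eq_empty_iff_forall_notMem.mp hdisj j ⟨hj1, hj2⟩
  · intro t ht
    rw [hptlm, mem_perp3]
    refine ⟨pairP t ht l hl, pairP t ht m hm, ?_⟩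
    have ht2 : t ∈ G.perp {l, m} := hsub2 ht
    by_cases htS : t ∈ G.Sig l m
    · have htU : t ∈ G.SigY l m ∪ G.SigM l m := by
        rw [hG.sig_union l m hlm hdlm]; exact htS
      rcases htU with htY | htM
      · exact dagYY hG hlm hdlm htY hey
      · exact absurd ⟨t, ht, htM⟩ hcase
    · have hpp : t ∈ G.perp (G.perp {l, m}) := by
        by_contra hpp; exact htS ⟨ht2, hpp⟩
      exact hpp ey (sig_perp (sigY_sub hG hlm hdlm hey))

/-- Dual core lemma for planes. -/
lemma subset_pl (hG : G.Axioms) {a b c l m : G.L} (hab : a ≠ b) (hd : G.dag a b)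
    (hc : c ∈ G.SigM a b) (hl : l ∈ G.perp {a, b, c}) (hm : m ∈ G.perp {a, b, c})
    (hlm : l ≠ m) : G.perp {a, b, c} ⊆ G.pl l m := by
  have hcS : c ∈ G.Sig a b := sigM_sub hG hab hd hc
  have pairP : ∀ s ∈ G.perp {a, b, c}, ∀ t ∈ G.perp {a, b, c}, G.dag s t :=
    hG.ax22 a b hab hd c hcS
  have hdlm : G.dag l m := pairP l hl m hm
  have hsub2 : G.perp {a, b, c} ⊆ G.perp {l, m} := fun t ht =>
    mem_perp2.mpr ⟨pairP t ht l hl, pairP t ht m hm⟩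
  obtain ⟨em, hem⟩ := hG.sigM_nonempty l m hlm hdlm
  have hpllm := hG.pl_spec l m hlm hdlm em hem
  have haP : a ∈ G.perp {a, b, c} :=
    mem_perp3.mpr ⟨G.dag_refl a, hd, G.dag_symm (sig_perp hcS a (Set.mem_insert a {b}))⟩
  have hbP : b ∈ G.perp {a, b, c} :=
    mem_perp3.mpr ⟨G.dag_symm hd, G.dag_refl b,
      G.dag_symm (sig_perp hcS b (Set.mem_insert_of_mem a rfl))⟩
  have hcP : c ∈ G.perp {a, b, c} :=
    mem_perp3.mpr ⟨sig_perp hcS a (Set.mem_insert a {b}),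
      sig_perp hcS b (Set.mem_insert_of_mem a rfl), G.dag_refl c⟩
  by_cases hcase : ∃ u ∈ G.perp {a, b, c}, u ∈ G.SigY l m
  · exfalso
    obtain ⟨u, huP, huY⟩ := hcase
    obtain ⟨ey, hey⟩ := hG.sigY_nonempty l m hlm hdlm
    have heyS : ey ∈ G.Sig l m := sigY_sub hG hlm hdlm hey
    have hptlm := hG.pt_spec l m hlm hdlm ey hey
    have hPsub : G.perp {a, b, c} ⊆ G.pt l m := by
      intro t ht
      rw [hptlm, mem_perp3]
      refine ⟨pairP t ht l hl, pairP t ht m hm, ?_⟩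
      have ht2 : t ∈ G.perp {l, m} := hsub2 ht
      by_cases htS : t ∈ G.Sig l m
      · have htY : t ∈ G.SigY l m :=
          sameClassY hG hlm hdlm huY htS (pairP u huP t ht)
        exact dagYY hG hlm hdlm htY hey
      · have hpp : t ∈ G.perp (G.perp {l, m}) := by
          by_contra hpp; exact htS ⟨ht2, hpp⟩
        exact hpp ey (sig_perp heyS)
    have hrev : G.pt l m ⊆ G.perp {a, b, c} := by
      intro s hs
      rw [hptlm] at hs
      have pairQ := hG.ax22 l m hlm hdlm ey heyS
      exact mem_perp3.mpr ⟨pairQ s hs a (by rw [← hptlm]; exact hPsub haP),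
        pairQ s hs b (by rw [← hptlm]; exact hPsub hbP),
        pairQ s hs c (by rw [← hptlm]; exact hPsub hcP)⟩
    have hPeq : G.perp {a, b, c} = G.pt l m :=
      Set.Subset.antisymm hPsub hrev
    obtain ⟨p', q', hpq, hdpq, r', hrS, hdisj⟩ := hG.ax3 a b hab hd c hcS
    have hrU : r' ∈ G.SigY p' q' ∪ G.SigM p' q' := by
      rw [hG.sig_union p' q' hpq hdpq]; exact hrS
    rcases hrU with hrY | hrM
    · obtain ⟨j, hj1, hj2⟩ := (hG.ax4 l m p' q' hlm hdlm hpq hdpq).1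
      rw [← hPeq] at hj1
      rw [hG.pt_spec p' q' hpq hdpq r' hrY] at hj2
      exact Set.eq_empty_iff_forall_notMem.mp hdisj j ⟨hj1, hj2⟩
    · obtain ⟨j, hj1, hj2⟩ := (hG.ax4 a b p' q' hab hd hpq hdpq).2
      rw [hG.pl_spec a b hab hd c hc] at hj1
      rw [hG.pl_spec p' q' hpq hdpq r' hrM] at hj2
      exact Set.eq_empty_iff_forall_notMem.mp hdisj j ⟨hj1, hj2⟩
  · intro t ht
    rw [hpllm, mem_perp3]
    refine ⟨pairP t ht l hl, pairP t ht m hm, ?_⟩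
    have ht2 : t ∈ G.perp {l, m} := hsub2 ht
    by_cases htS : t ∈ G.Sig l m
    · have htU : t ∈ G.SigY l m ∪ G.SigM l m := by
        rw [hG.sig_union l m hlm hdlm]; exact htS
      rcases htU with htY | htM
      · exact absurd ⟨t, ht, htY⟩ hcase
      · exact dagMM hG hlm hdlm htM hem
    · have hpp : t ∈ G.perp (G.perp {l, m}) := by
        by_contra hpp; exact htS ⟨ht2, hpp⟩
      exact hpp em (sig_perp (sigM_sub hG hlm hdlm hem))

/-- A point is determined by any two of its distinct lines. -/
lemma ptEq (hG : G.Axioms) {a b c l m : G.L} (hab : a ≠ b) (hd : G.dag a b)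
    (hc : c ∈ G.SigY a b) (hl : l ∈ G.perp {a, b, c}) (hm : m ∈ G.perp {a, b, c})
    (hlm : l ≠ m) : G.pt a b = G.pt l m := by
  have hcS : c ∈ G.Sig a b := sigY_sub hG hab hd hc
  have pairP := hG.ax22 a b hab hd c hcS
  have hdlm : G.dag l m := pairP l hl m hm
  have hspec := hG.pt_spec a b hab hd c hc
  have hfwd : G.perp {a, b, c} ⊆ G.pt l m := subset_pt hG hab hd hc hl hm hlm
  obtain ⟨ey, hey⟩ := hG.sigY_nonempty l m hlm hdlm
  have h2 := hG.pt_spec l m hlm hdlm ey hey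
  have haP : a ∈ G.perp {a, b, c} :=
    mem_perp3.mpr ⟨G.dag_refl a, hd, G.dag_symm (sig_perp hcS a (Set.mem_insert a {b}))⟩
  have hbP : b ∈ G.perp {a, b, c} :=
    mem_perp3.mpr ⟨G.dag_symm hd, G.dag_refl b,
      G.dag_symm (sig_perp hcS b (Set.mem_insert_of_mem a rfl))⟩
  have ha' : a ∈ G.perp {l, m, ey} := by rw [← h2]; exact hfwd haP
  have hb' : b ∈ G.perp {l, m, ey} := by rw [← h2]; exact hfwd hbP
  have hbwd : G.perp {l, m, ey} ⊆ G.pt a b := subset_pt hG hlm hdlm hey ha' hb' hab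
  rw [hspec, h2]
  exact Set.Subset.antisymm (by rw [← h2]; exact hfwd) (by rw [← hspec]; exact hbwd)

/-- A plane is determined by any two of its distinct lines. -/
lemma plEq (hG : G.Axioms) {a b c l m : G.L} (hab : a ≠ b) (hd : G.dag a b)
    (hc : c ∈ G.SigM a b) (hl : l ∈ G.perp {a, b, c}) (hm : m ∈ G.perp {a, b, c})
    (hlm : l ≠ m) : G.pl a b = G.pl l m := by
  have hcS : c ∈ G.Sig a b := sigM_sub hG hab hd hc
  have pairP := hG.ax22 a b hab hd c hcS
  have hdlm : G.dag l m := pairP l hl m hm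
  have hspec := hG.pl_spec a b hab hd c hc
  have hfwd : G.perp {a, b, c} ⊆ G.pl l m := subset_pl hG hab hd hc hl hm hlm
  obtain ⟨em, hem⟩ := hG.sigM_nonempty l m hlm hdlm
  have h2 := hG.pl_spec l m hlm hdlm em hem
  have haP : a ∈ G.perp {a, b, c} :=
    mem_perp3.mpr ⟨G.dag_refl a, hd, G.dag_symm (sig_perp hcS a (Set.mem_insert a {b}))⟩
  have hbP : b ∈ G.perp {a, b, c} :=
    mem_perp3.mpr ⟨G.dag_symm hd, G.dag_refl b,
      G.dag_symm (sig_perp hcS b (Set.mem_insert_of_mem a rfl))⟩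
  have ha' : a ∈ G.perp {l, m, em} := by rw [← h2]; exact hfwd haP
  have hb' : b ∈ G.perp {l, m, em} := by rw [← h2]; exact hfwd hbP
  have hbwd : G.perp {l, m, em} ⊆ G.pl a b := subset_pl hG hlm hdlm hem ha' hb' hab
  rw [hspec, h2]
  exact Set.Subset.antisymm (by rw [← h2]; exact hfwd) (by rw [← hspec]; exact hbwd)

end Stmt17Aux

open Stmt17Aux

/-- In a `⋎`-tetrad `o, p, q, r` with common point `Z` and
diagonal `b = (o ⊓ q) ∩ (r ⊓ p)`, the plane `o ⊓ p` does not contain any point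
of `b` other than `Z`. -/
theorem stmt_17 (G : LineGeom) (hG : G.Axioms) (o p q r b : G.L)
    (Z : Set G.L)
    (hT : G.YTetrad o p q r)
    (hZ : G.IsPoint Z) (hoZ : o ∈ Z) (hpZ : p ∈ Z) (hqZ : q ∈ Z) (hrZ : r ∈ Z)
    (hb : G.pl o q ∩ G.pl r p = {b}) :
    ∀ X : Set G.L, G.IsPoint X → b ∈ X → X ≠ Z → X ∩ G.pl o p = ∅ := by
  classical
  intro X hX hbX hXZ
  -- triad data
  obtain ⟨_, _, T3, T4⟩ := hT
  obtain ⟨hop, hpq, hoq, dop, dpq, doq, hoY_pq, hpY_qo, hqY_op⟩ := T4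
  obtain ⟨hor, hrp, hop', dor, drp, dop', hoY_rp, hrY_po, hpY_or⟩ := T3
  -- plane representatives
  obtain ⟨coq, hcoq⟩ := hG.sigM_nonempty o q hoq doq
  have hploq := hG.pl_spec o q hoq doq coq hcoq
  obtain ⟨crp, hcrp⟩ := hG.sigM_nonempty r p hrp drp
  have hplrp := hG.pl_spec r p hrp drp crp hcrp
  obtain ⟨cm, hcm⟩ := hG.sigM_nonempty o p hop dop
  have hplop := hG.pl_spec o p hop dop cm hcm
  -- b lies in both planes
  have hbmem : b ∈ G.pl o q ∩ G.pl r p := by rw [hb]; exact rfl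
  have hb1 : b ∈ G.perp {o, q, coq} := by rw [← hploq]; exact hbmem.1
  have hb2 : b ∈ G.perp {r, p, crp} := by rw [← hplrp]; exact hbmem.2
  obtain ⟨dbo, dbq, dbcoq⟩ := mem_perp3.mp hb1
  obtain ⟨dbr, dbp, dbcrp⟩ := mem_perp3.mp hb2
  -- b ≠ o
  have hbo : b ≠ o := by
    intro h
    exact classOpp hG hrp drp hoY_rp hcrp (h ▸ dbcrp)
  -- key: b ∉ pl o p
  have hK : b ∉ G.pl o p := by
    intro hbpl
    have hbP : b ∈ G.perp {o, p, cm} := by rw [← hplop]; exact hbpl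
    have hoP : o ∈ G.perp {o, p, cm} :=
      mem_perp3.mpr ⟨G.dag_refl o, dop,
        G.dag_symm (sig_perp (sigM_sub hG hop dop hcm) o (Set.mem_insert o {p}))⟩
    have hoQ : o ∈ G.perp {o, q, coq} :=
      mem_perp3.mpr ⟨G.dag_refl o, doq,
        G.dag_symm (sig_perp (sigM_sub hG hoq doq hcoq) o (Set.mem_insert o {q}))⟩
    have e1 : G.pl o p = G.pl o b := plEq hG hop dop hcm hoP hbP (Ne.symm hbo)
    have e2 : G.pl o q = G.pl o b := plEq hG hoq doq hcoq hoQ hb1 (Ne.symm hbo)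
    have hq : q ∈ G.pl o q := by
      rw [hploq]
      exact mem_perp3.mpr ⟨G.dag_symm doq, G.dag_refl q,
        G.dag_symm (sig_perp (sigM_sub hG hoq doq hcoq) q (Set.mem_insert_of_mem o rfl))⟩
    have hq' : q ∈ G.perp {o, p, cm} := by
      rw [← hplop, e1, ← e2]; exact hq
    exact classOpp hG hop dop hqY_op hcm (mem_perp3.mp hq').2.2
  -- now the main argument
  rw [Set.eq_empty_iff_forall_notMem]
  rintro m ⟨hmX, hmPl⟩
  -- the point X
  obtain ⟨x, y, hxy, dxy, hXeq⟩ := hX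
  obtain ⟨cx, hcx⟩ := hG.sigY_nonempty x y hxy dxy
  have hXp : X = G.perp {x, y, cx} := by rw [hXeq, hG.pt_spec x y hxy dxy cx hcx]
  have pairX := hG.ax22 x y hxy dxy cx (sigY_sub hG hxy dxy hcx)
  have dbm : G.dag b m := pairX b (hXp ▸ hbX) m (hXp ▸ hmX)
  have hbm : b ≠ m := fun h => hK (h ▸ hmPl)
  have hmP : m ∈ G.perp {o, p, cm} := by rw [← hplop]; exact hmPl
  obtain ⟨dmo, dmp, dmcm⟩ := mem_perp3.mp hmP
  by_cases hmS : m ∈ G.Sig o p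
  · -- m is in the Sig class; must be SigM, so pl o p = perp {o,p,m} ∋ b
    have hmM : m ∈ G.SigM o p := by
      have : m ∈ G.SigY o p ∪ G.SigM o p := by
        rw [hG.sig_union o p hop dop]; exact hmS
      rcases this with hmY | hmM
      · exact absurd dmcm (classOpp hG hop dop hmY hcm)
      · exact hmM
    have : b ∈ G.pl o p := by
      rw [hG.pl_spec o p hop dop m hmM]
      exact mem_perp3.mpr ⟨dbo, dbp, dbm⟩
    exact hK this
  · -- m is in the double perp: m ∈ pt o p = Z, and b ∈ Z, so X = Z
    have hm2 : m ∈ G.perp {o, p} := mem_perp2.mpr ⟨dmo, dmp⟩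
    have hmpp : m ∈ G.perp (G.perp {o, p}) := by
      by_contra hpp; exact hmS ⟨hm2, hpp⟩
    obtain ⟨cy, hcy⟩ := hG.sigY_nonempty o p hop dop
    have hptop := hG.pt_spec o p hop dop cy hcy
    have hmpt : m ∈ G.pt o p := by
      rw [hptop]
      exact mem_perp3.mpr ⟨dmo, dmp, hmpp cy (sig_perp (sigY_sub hG hop dop hcy))⟩
    -- b ∈ pt o p
    have hbpt : b ∈ G.pt o p := by
      have hb2' : b ∈ G.perp {o, p} := mem_perp2.mpr ⟨dbo, dbp⟩
      by_cases hbS : b ∈ G.Sig o p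
      · have : b ∈ G.SigY o p ∪ G.SigM o p := by
          rw [hG.sig_union o p hop dop]; exact hbS
        rcases this with hbY | hbM
        · rw [hG.pt_spec o p hop dop b hbY]
          exact mem_perp3.mpr ⟨dbo, dbp, G.dag_refl b⟩
        · exact absurd (G.dag_symm dbq) (classOpp hG hop dop hqY_op hbM)
      · have hbpp : b ∈ G.perp (G.perp {o, p}) := by
          by_contra hpp; exact hbS ⟨hb2', hpp⟩
        rw [hptop]
        exact mem_perp3.mpr ⟨dbo, dbp, hbpp cy (sig_perp (sigY_sub hG hop dop hcy))⟩
    -- Z = pt o p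
    obtain ⟨z, w, hzw, dzw, hZeq⟩ := hZ
    obtain ⟨cz, hcz⟩ := hG.sigY_nonempty z w hzw dzw
    have hZp : Z = G.perp {z, w, cz} := by rw [hZeq, hG.pt_spec z w hzw dzw cz hcz]
    have hZop : G.pt z w = G.pt o p :=
      ptEq hG hzw dzw hcz (hZp ▸ hoZ) (hZp ▸ hpZ) hop
    have hbZ : b ∈ Z := by rw [hZeq, hZop]; exact hbpt
    have hmZ : m ∈ Z := by rw [hZeq, hZop]; exact hmpt
    -- X = pt b m = Z
    have hX1 : G.pt x y = G.pt b m :=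
      ptEq hG hxy dxy hcx (hXp ▸ hbX) (hXp ▸ hmX) hbm
    have hZ1 : G.pt z w = G.pt b m :=
      ptEq hG hzw dzw hcz (hZp ▸ hbZ) (hZp ▸ hmZ) hbm
    exact hXZ (by rw [hXeq, hX1, ← hZ1, ← hZeq])
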